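/- Let d = (d_1, …, d_m) be a finite list of positive integers with m ≥ 2 and let j ≥ 1 be an integer that divides at least one of d_1, …, d_{m−1}. Then the Sylvester waves defined by the explicit formula satisfy the same recursion as the restricted partition function: W_j(s, (d_1, …, d_m)) − W_j(s − d_m, (d_1, …, d_m)) = W_j(s, (d_1, …, d_{m−1})) for every integer s. -/

import Mathlib

/-- The factor `(k t)/(e^{k t} - 1)`, extended by its limiting value `1` at `t = 0`. -/
noncomputable def bernFactor (k : ℕ) (t : ℝ) : ℝ :=
  if t = 0 then 1 else (k : ℝ) * t / (Real.exp ((k : ℝ) * t) - 1)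

/-- The Bernoulli polynomial of higher order `B_n^{(m)}(s | d)`, defined as the `n`-th
derivative at `t = 0` of `t ↦ e^{st} ∏_i (d_i t)/(e^{d_i t} - 1)`. -/
noncomputable def bernHO (d : List ℕ) (n : ℕ) (s : ℝ) : ℝ :=
  iteratedDeriv n (fun t => Real.exp (s * t) * (d.map fun k => bernFactor k t).prod) 0

/-- The generalized Euler (Frobenius) polynomial of higher order `H_n^{(m)}(s, ρ | d)`,
defined as the `n`-th complex derivative at `t = 0` of
`t ↦ e^{st} ∏_i (1 - ρ^{d_i})/(e^{d_i t} - ρ^{d_i})`. -/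
noncomputable def frobHO (d : List ℕ) (n : ℕ) (ρ : ℂ) (s : ℂ) : ℂ :=
  iteratedDeriv n
    (fun t : ℂ => Complex.exp (s * t) *
      (d.map fun k => (1 - ρ ^ k) / (Complex.exp ((k : ℂ) * t) - ρ ^ k)).prod) 0

/-- The Sylvester wave `W_j(s, d)`, given by the explicit formula
`W_j(s, d) = (1/((ω_j − 1)! π_j)) ∑_ρ [ρ^{−s} / ∏_{i ∉ S_j} (1 − ρ^{d_i})]
  ∑_{n=0}^{ω_j−1} C(ω_j − 1, n) B_n^{(ω_j)}(s + σ_j | (d_i)_{i ∈ S_j})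
  H_{ω_j−1−n}^{(m−ω_j)}(∑_{i ∉ S_j} d_i, ρ | (d_i)_{i ∉ S_j})`,
where `ρ` runs over the primitive `j`-th roots of unity, `S_j` is the set of indices
with `j ∣ d_i`, `ω_j = |S_j|`, `π_j = ∏_{i ∈ S_j} d_i` and `σ_j = ∑_{i ∈ S_j} d_i`. -/
noncomputable def sylvesterWave (j : ℕ) (d : List ℕ) (s : ℤ) : ℂ :=
  let dS := d.filter fun x => j ∣ x
  let dN := d.filter fun x => ¬ j ∣ x
  let ω := dS.length
  (1 / (((ω - 1).factorial : ℂ) * (dS.prod : ℂ))) *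
    ∑ ρ ∈ primitiveRoots j ℂ,
      (ρ ^ (-s) / (dN.map fun k => 1 - ρ ^ k).prod) *
        ∑ n ∈ Finset.range ω,
          ((ω - 1).choose n : ℂ) *
            ((bernHO dS n ((s : ℝ) + (dS.sum : ℝ)) : ℝ) : ℂ) *
            frobHO dN (ω - 1 - n) ρ ((dN.sum : ℕ) : ℂ)


open Complex Filter Topology

namespace SylvAux

noncomputable def bfC (k : ℕ) (t : ℂ) : ℂ :=
  if t = 0 then 1 else (k : ℂ) * t / (Complex.exp ((k : ℂ) * t) - 1)

lemma bfC_eventuallyEq {k : ℕ} {z : ℂ} (hz : z ≠ 0) :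
    bfC k =ᶠ[𝓝 z] fun t => (k : ℂ) * t / (Complex.exp ((k : ℂ) * t) - 1) := by
  filter_upwards [compl_singleton_mem_nhds hz] with t ht
  exact if_neg ht

lemma exp_ne_one_of_small {k : ℕ} (hk : 0 < k) {z : ℂ} (hz : z ≠ 0)
    (hb : ‖z‖ < 2 * Real.pi / k) : Complex.exp ((k : ℂ) * z) ≠ 1 := by
  intro h
  rw [Complex.exp_eq_one_iff] at h
  obtain ⟨n, hn⟩ := h
  have hk' : (0 : ℝ) < k := by exact_mod_cast hk
  have habs : (k : ℝ) * ‖z‖ = |(n : ℝ)| * (2 * Real.pi) := by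
    have := congrArg (fun w : ℂ => ‖w‖) hn
    simpa [norm_mul, Complex.norm_natCast, Complex.norm_intCast, Complex.norm_real,
      Complex.norm_two, Complex.norm_I, abs_of_pos Real.pi_pos] using this
  have h2 : (k : ℝ) * ‖z‖ < 2 * Real.pi := by
    calc (k : ℝ) * ‖z‖ < k * (2 * Real.pi / k) := by
          exact mul_lt_mul_of_pos_left hb hk'
      _ = 2 * Real.pi := by field_simp
  rw [habs] at h2
  have hn1 : |(n : ℝ)| < 1 := by nlinarith [Real.pi_pos]
  have hn0 : n = 0 := by
    have h3 : ((|n| : ℤ) : ℝ) < 1 := by rwa [Int.cast_abs]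
    have h4 : |n| < 1 := by exact_mod_cast h3
    rw [abs_lt] at h4
    omega
  rw [hn0] at hn
  have hzz : (k : ℂ) * z = 0 := by rw [hn]; norm_num
  have hk0 : ((k : ℂ)) ≠ 0 := by exact_mod_cast hk.ne'
  exact hz ((mul_eq_zero.mp hzz).resolve_left hk0)

lemma analyticAt_bfC {k : ℕ} (hk : 0 < k) (x : ℝ) : AnalyticAt ℂ (bfC k) (x : ℂ) := by
  have hk0 : ((k : ℂ)) ≠ 0 := by exact_mod_cast hk.ne'
  rcases eq_or_ne x 0 with rfl | hx
  · push_cast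
    apply Complex.analyticAt_of_differentiable_on_punctured_nhds_of_continuousAt
    · rw [eventually_nhdsWithin_iff]
      have hball : Metric.ball (0 : ℂ) (2 * Real.pi / k) ∈ 𝓝 (0 : ℂ) :=
        Metric.ball_mem_nhds _ (by positivity)
      filter_upwards [hball] with z hz hz0
      simp only [Set.mem_compl_iff, Set.mem_singleton_iff] at hz0
      have hb : ‖z‖ < 2 * Real.pi / k := by
        simpa [Metric.mem_ball, Complex.dist_eq] using hz
      have hexp : Complex.exp ((k : ℂ) * z) - 1 ≠ 0 :=
        sub_ne_zero.mpr (exp_ne_one_of_small hk hz0 hb)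
      have hdiff : DifferentiableAt ℂ
          (fun t => (k : ℂ) * t / (Complex.exp ((k : ℂ) * t) - 1)) z := by
        apply DifferentiableAt.div
        · fun_prop
        · fun_prop
        · exact hexp
      exact hdiff.congr_of_eventuallyEq (bfC_eventuallyEq hz0)
    · have hslope : Tendsto (fun t : ℂ => (Complex.exp ((k : ℂ) * t) - 1) / t)
          (𝓝[≠] (0 : ℂ)) (𝓝 (k : ℂ)) := by
        have hd : HasDerivAt (fun t : ℂ => Complex.exp ((k : ℂ) * t)) (k : ℂ) 0 := by
          have := (((hasDerivAt_id (0 : ℂ)).const_mul ((k : ℂ))).cexp)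
          simpa using this
        have := hasDerivAt_iff_tendsto_slope.mp hd
        apply this.congr
        intro t
        rw [slope_def_field]
        simp
      have htne : Tendsto (bfC k) (𝓝[≠] (0 : ℂ)) (𝓝 1) := by
        have hlim : Tendsto (fun t : ℂ => (k : ℂ) / ((Complex.exp ((k : ℂ) * t) - 1) / t))
            (𝓝[≠] (0 : ℂ)) (𝓝 ((k : ℂ) / k)) := tendsto_const_nhds.div hslope hk0
        rw [div_self hk0] at hlim
        apply hlim.congr'
        filter_upwards [self_mem_nhdsWithin] with t ht
        have ht0 : t ≠ 0 := ht
        rw [bfC, if_neg ht0, div_div_eq_mul_div]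
      rw [ContinuousAt]
      have h0 : bfC k 0 = 1 := by simp [bfC]
      rw [h0, ← nhdsNE_sup_pure (0 : ℂ), tendsto_sup]
      exact ⟨htne, by simpa [h0] using tendsto_pure_nhds (bfC k) 0⟩
  · have hx' : (x : ℂ) ≠ 0 := by exact_mod_cast hx
    have hne : Complex.exp ((k : ℂ) * (x : ℂ)) - 1 ≠ 0 := by
      rw [sub_ne_zero]
      intro h
      have h1 : Complex.exp ((k : ℂ) * (x : ℂ)) = ((Real.exp (k * x) : ℝ) : ℂ) := by
        push_cast
        rfl
      rw [h1] at h
      have he1 : Real.exp (k * x) = 1 := by exact_mod_cast h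
      have he0 : (k : ℝ) * x = 0 :=
        Real.exp_injective (by rw [he1, Real.exp_zero])
      rcases mul_eq_zero.mp he0 with h2 | h2
      · exact hk.ne' (by exact_mod_cast h2)
      · exact hx h2
    have hratio : AnalyticAt ℂ (fun t => (k : ℂ) * t / (Complex.exp ((k : ℂ) * t) - 1)) (x : ℂ) := by
      apply AnalyticAt.div
      · exact analyticAt_const.mul analyticAt_id
      · exact (analyticAt_cexp.comp (analyticAt_const.mul analyticAt_id)).sub analyticAt_const
      · exact hne
    exact hratio.congr (bfC_eventuallyEq hx').symm


lemma bfC_ofReal (k : ℕ) (x : ℝ) : bfC k (x : ℂ) = ((bernFactor k x : ℝ) : ℂ) := by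
  unfold bfC bernFactor
  by_cases h : x = 0
  · simp [h]
  · rw [if_neg (by exact_mod_cast h), if_neg h]
    push_cast
    rfl

lemma analyticAt_ffC {k : ℕ} (hk : 0 < k) {ρ : ℂ} (hρ1 : ‖ρ‖ = 1) (hρk : ρ ^ k ≠ 1)
    (x : ℝ) :
    AnalyticAt ℂ (fun t => (1 - ρ ^ k) / (Complex.exp ((k : ℂ) * t) - ρ ^ k)) (x : ℂ) := by
  have hne : Complex.exp ((k : ℂ) * (x : ℂ)) - ρ ^ k ≠ 0 := by
    rw [sub_ne_zero]
    intro h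
    have habs : Real.exp ((k : ℝ) * x) = 1 := by
      have h1 : ‖Complex.exp ((k : ℂ) * (x : ℂ))‖ = 1 := by
        rw [h, norm_pow, hρ1, one_pow]
      have h2 : ((k : ℂ) * (x : ℂ)) = (((k : ℝ) * x : ℝ) : ℂ) := by push_cast; ring
      rwa [Complex.norm_exp, h2, Complex.ofReal_re] at h1
    have he0 : (k : ℝ) * x = 0 := Real.exp_injective (by rw [habs, Real.exp_zero])
    have hx0 : x = 0 := by
      rcases mul_eq_zero.mp he0 with h2 | h2
      · exact absurd h2 (by exact_mod_cast hk.ne')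
      · exact h2
    rw [hx0] at h
    simp at h
    exact hρk h.symm
  exact analyticAt_const.div
    ((analyticAt_cexp.comp (analyticAt_const.mul analyticAt_id)).sub analyticAt_const) hne

lemma analyticAt_list_prod {α : Type*} (l : List α) (F : α → ℂ → ℂ) {x : ℂ}
    (h : ∀ a ∈ l, AnalyticAt ℂ (F a) x) :
    AnalyticAt ℂ (fun t => (l.map fun a => F a t).prod) x := by
  induction l with
  | nil => simpa using analyticAt_const
  | cons a l ih =>
    simp only [List.map_cons, List.prod_cons]
    exact (h a List.mem_cons_self).mul (ih fun b hb => h b (List.mem_cons_of_mem a hb))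

lemma analyticAt_derivC {f : ℂ → ℂ} {x : ℂ} (hf : AnalyticAt ℂ f x) :
    AnalyticAt ℂ (deriv f) x := by
  obtain ⟨s, h1, h2, h3⟩ := eventually_nhds_iff.mp hf.eventually_analyticAt
  exact (AnalyticOnNhd.deriv (fun y hy => h1 y hy)) x h3

lemma analyticAt_iteratedDerivC {f : ℂ → ℂ} {x : ℂ} (hf : AnalyticAt ℂ f x) (n : ℕ) :
    AnalyticAt ℂ (iteratedDeriv n f) x := by
  induction n generalizing f with
  | zero => simpa [iteratedDeriv_zero] using hf
  | succ n ih =>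
    rw [iteratedDeriv_succ']
    exact ih (analyticAt_derivC hf)

lemma iteratedDeriv_add_analytic {f g : ℂ → ℂ} (n : ℕ) :
    ∀ (x : ℂ), AnalyticAt ℂ f x → AnalyticAt ℂ g x →
      iteratedDeriv n (fun t => f t + g t) x = iteratedDeriv n f x + iteratedDeriv n g x := by
  induction n with
  | zero => intro x _ _; simp
  | succ n ih =>
    intro x hf hg
    rw [iteratedDeriv_succ, iteratedDeriv_succ, iteratedDeriv_succ]
    have hev : iteratedDeriv n (fun t => f t + g t) =ᶠ[𝓝 x]
        fun y => iteratedDeriv n f y + iteratedDeriv n g y := by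
      filter_upwards [hf.eventually_analyticAt, hg.eventually_analyticAt] with y hfy hgy
      exact ih y hfy hgy
    rw [hev.deriv_eq]
    exact deriv_add (analyticAt_iteratedDerivC hf n).differentiableAt (analyticAt_iteratedDerivC hg n).differentiableAt

lemma iteratedDeriv_const_mul_analytic {f : ℂ → ℂ} (c : ℂ) (n : ℕ) :
    ∀ (x : ℂ), AnalyticAt ℂ f x →
      iteratedDeriv n (fun t => c * f t) x = c * iteratedDeriv n f x := by
  induction n with
  | zero => intro x _; simp
  | succ n ih =>
    intro x hf
    rw [iteratedDeriv_succ, iteratedDeriv_succ]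
    have hev : iteratedDeriv n (fun t => c * f t) =ᶠ[𝓝 x]
        fun y => c * iteratedDeriv n f y := by
      filter_upwards [hf.eventually_analyticAt] with y hfy
      exact ih y hfy
    rw [hev.deriv_eq]
    exact deriv_const_mul c (analyticAt_iteratedDerivC hf n).differentiableAt

lemma iteratedDeriv_sub_analytic {f g : ℂ → ℂ} (n : ℕ) (x : ℂ)
    (hf : AnalyticAt ℂ f x) (hg : AnalyticAt ℂ g x) :
    iteratedDeriv n (fun t => f t - g t) x = iteratedDeriv n f x - iteratedDeriv n g x := by
  have h1 : (fun t => f t - g t) = fun t => f t + (-1 : ℂ) * g t := by funext t; ring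
  rw [h1, iteratedDeriv_add_analytic (g := fun t => (-1 : ℂ) * g t) n x hf (analyticAt_const.mul hg),
    iteratedDeriv_const_mul_analytic (-1) n x hg]
  ring

lemma iteratedDeriv_mul_analytic {f g : ℂ → ℂ} (n : ℕ) :
    ∀ (x : ℂ), AnalyticAt ℂ f x → AnalyticAt ℂ g x →
      iteratedDeriv n (fun t => f t * g t) x =
        ∑ i ∈ Finset.range (n + 1),
          (n.choose i : ℂ) * (iteratedDeriv i f x * iteratedDeriv (n - i) g x) := by
  induction n with
  | zero => intro x _ _; simp
  | succ n ih =>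
    intro x hf hg
    rw [iteratedDeriv_succ]
    have hev : iteratedDeriv n (fun t => f t * g t) =ᶠ[𝓝 x]
        fun y => ∑ i ∈ Finset.range (n + 1),
          (n.choose i : ℂ) * (iteratedDeriv i f y * iteratedDeriv (n - i) g y) := by
      filter_upwards [hf.eventually_analyticAt, hg.eventually_analyticAt] with y hfy hgy
      exact ih y hfy hgy
    rw [hev.deriv_eq]
    have hdiff : ∀ i ∈ Finset.range (n + 1), DifferentiableAt ℂ
        (fun y => (n.choose i : ℂ) * (iteratedDeriv i f y * iteratedDeriv (n - i) g y)) x := by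
      intro i _
      exact ((analyticAt_iteratedDerivC hf i).mul
        (analyticAt_iteratedDerivC hg (n - i))).differentiableAt.const_mul _
    rw [deriv_fun_sum hdiff]
    have hterm : ∀ i ∈ Finset.range (n + 1),
        deriv (fun y => (n.choose i : ℂ) * (iteratedDeriv i f y * iteratedDeriv (n - i) g y)) x
          = (n.choose i : ℂ) * (iteratedDeriv (i + 1) f x * iteratedDeriv (n - i) g x
              + iteratedDeriv i f x * iteratedDeriv (n - i + 1) g x) := by
      intro i _
      rw [deriv_const_mul (d := fun y => iteratedDeriv i f y * iteratedDeriv (n - i) g y) _ (((analyticAt_iteratedDerivC hf i).mul (analyticAt_iteratedDerivC hg (n - i))).differentiableAt),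
        deriv_fun_mul (analyticAt_iteratedDerivC hf i).differentiableAt (analyticAt_iteratedDerivC hg (n - i)).differentiableAt,
        ← iteratedDeriv_succ, ← iteratedDeriv_succ]
    rw [Finset.sum_congr rfl hterm]
    -- now pure binomial bookkeeping
    have key : ∀ (a b : ℕ → ℂ),
        ∑ i ∈ Finset.range (n + 1), (n.choose i : ℂ) * (a (i+1) * b (n - i) + a i * b (n - i + 1))
          = ∑ i ∈ Finset.range (n + 2), ((n+1).choose i : ℂ) * (a i * b (n + 1 - i)) := by
      intro a b
      have hsplit : ∑ i ∈ Finset.range (n + 1),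
          (n.choose i : ℂ) * (a (i+1) * b (n - i) + a i * b (n - i + 1))
          = (∑ i ∈ Finset.range (n + 1), (n.choose i : ℂ) * (a (i+1) * b (n - i)))
            + ∑ i ∈ Finset.range (n + 1), (n.choose i : ℂ) * (a i * b (n - i + 1)) := by
        rw [← Finset.sum_add_distrib]
        exact Finset.sum_congr rfl fun i _ => by ring
      have e1 : ∑ i ∈ Finset.range (n + 1), (n.choose i : ℂ) * (a i * b (n - i + 1))
          = ∑ i ∈ Finset.range (n + 2), (n.choose i : ℂ) * (a i * b (n + 1 - i)) := by
        rw [Finset.sum_range_succ (fun i => ((n.choose i : ℂ)) * (a i * b (n + 1 - i))) (n+1)]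
        have hz : (n.choose (n+1) : ℂ) = 0 := by exact_mod_cast Nat.choose_succ_self n
        rw [hz, zero_mul, add_zero]
        refine Finset.sum_congr rfl fun i hi => ?_
        have hmem := Finset.mem_range.mp hi
        have hb : n - i + 1 = n + 1 - i := by omega
        rw [hb]
      have e2 : ∑ i ∈ Finset.range (n + 2), (n.choose i : ℂ) * (a i * b (n + 1 - i))
          = (∑ i ∈ Finset.range (n + 1), (n.choose (i+1) : ℂ) * (a (i+1) * b (n + 1 - (i+1))))
            + (n.choose 0 : ℂ) * (a 0 * b (n + 1)) := by
        rw [Finset.sum_range_succ' (fun i => ((n.choose i : ℂ)) * (a i * b (n + 1 - i))) (n+1)]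
        norm_num
      have e4 : ∑ i ∈ Finset.range (n + 2), ((n+1).choose i : ℂ) * (a i * b (n + 1 - i))
          = (∑ i ∈ Finset.range (n + 1), ((n+1).choose (i+1) : ℂ) * (a (i+1) * b (n + 1 - (i+1))))
            + ((n+1).choose 0 : ℂ) * (a 0 * b (n + 1)) := by
        rw [Finset.sum_range_succ' (fun i => (((n+1).choose i : ℂ)) * (a i * b (n + 1 - i))) (n+1)]
        norm_num
      rw [hsplit, e1, e2, e4, ← add_assoc, ← Finset.sum_add_distrib]
      have e3 : ∀ i ∈ Finset.range (n+1),
          (n.choose i : ℂ) * (a (i+1) * b (n - i))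
            + (n.choose (i+1) : ℂ) * (a (i+1) * b (n + 1 - (i+1)))
          = ((n+1).choose (i+1) : ℂ) * (a (i+1) * b (n + 1 - (i+1))) := by
        intro i hi
        have hni : n + 1 - (i+1) = n - i := by omega
        have hc : ((n+1).choose (i+1) : ℕ) = n.choose i + n.choose (i+1) :=
          Nat.choose_succ_succ n i
        rw [hni]
        push_cast [hc]
        ring
      rw [Finset.sum_congr rfl e3]
      norm_num
    rw [key (fun i => iteratedDeriv i f x) (fun i => iteratedDeriv i g x)]

lemma iteratedDeriv_const' (n : ℕ) (c : ℂ) (x : ℂ) :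
    iteratedDeriv n (fun _ => c) x = if n = 0 then c else 0 := by
  induction n generalizing c with
  | zero => simp
  | succ n ih =>
    rw [iteratedDeriv_succ']
    simp only [deriv_const']
    rw [ih 0]
    simp

lemma iteratedDeriv_id' (n : ℕ) (x : ℂ) :
    iteratedDeriv n (fun t : ℂ => t) x = if n = 0 then x else if n = 1 then 1 else 0 := by
  cases n with
  | zero => simp
  | succ n =>
    rw [iteratedDeriv_succ']
    have hder : deriv (fun t : ℂ => t) = fun _ => (1 : ℂ) := by
      funext t; simp
    rw [hder, iteratedDeriv_const']
    cases n with
    | zero => simp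
    | succ m => simp

lemma iteratedDeriv_id_mul_analytic {g : ℂ → ℂ} (hg : AnalyticAt ℂ g 0) (n : ℕ) (hn : 1 ≤ n) :
    iteratedDeriv n (fun t => t * g t) 0 = (n : ℂ) * iteratedDeriv (n - 1) g 0 := by
  have hid : AnalyticAt ℂ (fun t : ℂ => t) 0 := analyticAt_id
  rw [iteratedDeriv_mul_analytic n 0 hid hg]
  rw [Finset.sum_eq_single 1]
  · rw [iteratedDeriv_id']
    norm_num
  · intro i hi hne
    rw [iteratedDeriv_id']
    rcases Nat.eq_zero_or_pos i with rfl | hipos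
    · simp
    · have hi2 : ¬ i = 0 := by omega
      have hi1 : ¬ i = 1 := hne
      rw [if_neg hi2, if_neg hi1]
      ring
  · intro hmem
    exact absurd (Finset.mem_range.mpr (by omega)) hmem

lemma iteratedDeriv_ofReal {F : ℂ → ℂ} {g : ℝ → ℝ} (n : ℕ)
    (hF : ∀ x : ℝ, AnalyticAt ℂ F (x : ℂ)) (hFg : ∀ x : ℝ, F (x : ℂ) = ((g x : ℝ) : ℂ)) :
    ∀ x : ℝ, iteratedDeriv n F (x : ℂ) = ((iteratedDeriv n g x : ℝ) : ℂ) := by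
  induction n generalizing F g with
  | zero => intro x; simpa using hFg x
  | succ n ih =>
    have hder : ∀ x : ℝ, deriv F (x : ℂ) = ((deriv g x : ℝ) : ℂ) := by
      intro x
      have hdF : HasDerivAt F (deriv F (x : ℂ)) (x : ℂ) := (hF x).differentiableAt.hasDerivAt
      have hre : HasDerivAt (fun y : ℝ => (F (y : ℂ)).re) (deriv F (x : ℂ)).re x :=
        hdF.real_of_complex
      have hgre : (fun y : ℝ => (F (y : ℂ)).re) = g := by
        funext y; rw [hFg y]; simp
      have hg' : deriv g x = (deriv F (x : ℂ)).re := by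
        rw [← hgre]; exact hre.deriv
      have him : (deriv F (x : ℂ)).im = 0 := by
        have hdF2 : HasDerivAt (fun z => -(Complex.I * F z))
            (-(Complex.I * deriv F (x : ℂ))) (x : ℂ) := (hdF.const_mul Complex.I).neg
        have hre2 : HasDerivAt (fun y : ℝ => (-(Complex.I * F (y : ℂ))).re)
            (-(Complex.I * deriv F (x : ℂ))).re x := hdF2.real_of_complex
        have hzero : (fun y : ℝ => (-(Complex.I * F (y : ℂ))).re) = fun _ => (0 : ℝ) := by
          funext y; rw [hFg y]; simp
        rw [hzero] at hre2
        have h0 : (-(Complex.I * deriv F (x : ℂ))).re = 0 :=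
          HasDerivAt.unique hre2 (hasDerivAt_const x (0 : ℝ))
        simpa using h0
      apply Complex.ext
      · simpa using hg'.symm
      · simpa using him
    intro x
    rw [iteratedDeriv_succ', iteratedDeriv_succ']
    exact ih (fun y => analyticAt_derivC (hF y)) hder x

noncomputable def core (dS dN : List ℕ) (ρ c : ℂ) (t : ℂ) : ℂ :=
  Complex.exp (c * t) *
    ((dS.map fun k => bfC k t).prod *
      (dN.map fun (k : ℕ) => (1 - ρ ^ k) / (Complex.exp ((k : ℂ) * t) - ρ ^ k)).prod)

lemma analyticAt_core {dS dN : List ℕ} {ρ : ℂ} (hρ1 : ‖ρ‖ = 1)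
    (hS : ∀ k ∈ dS, 0 < k) (hN : ∀ k ∈ dN, 0 < k ∧ ρ ^ k ≠ 1) (c : ℂ) (x : ℝ) :
    AnalyticAt ℂ (core dS dN ρ c) (x : ℂ) := by
  unfold core
  exact (analyticAt_cexp.comp (analyticAt_const.mul analyticAt_id)).mul
    ((analyticAt_list_prod dS _ fun k hk => analyticAt_bfC (hS k hk) x).mul
      (analyticAt_list_prod dN _ fun k hk => analyticAt_ffC (hN k hk).1 hρ1 (hN k hk).2 x))

lemma ofReal_list_prod (l : List ℝ) : ((l.prod : ℝ) : ℂ) = (l.map fun (r : ℝ) => (r : ℂ)).prod := by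
  induction l with
  | nil => simp
  | cons a l ih => simp [ih]

lemma ofReal_list_sum (l : List ℝ) : ((l.sum : ℝ) : ℂ) = (l.map fun (r : ℝ) => (r : ℂ)).sum := by
  induction l with
  | nil => simp
  | cons a l ih => simp [ih]

lemma abs_of_primitive {j : ℕ} (hj : 1 ≤ j) {ρ : ℂ} (hρ : IsPrimitiveRoot ρ j) :
    ‖ρ‖ = 1 := by
  have := Complex.norm_eq_one_of_pow_eq_one hρ.pow_eq_one (by omega)
  simpa using this

lemma frobHO_eq (d : List ℕ) (n : ℕ) (ρ s : ℂ) :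
    frobHO d n ρ s = iteratedDeriv n (fun t : ℂ => Complex.exp (s * t) *
      (d.map fun (k : ℕ) => (1 - ρ ^ k) / (Complex.exp ((k : ℂ) * t) - ρ ^ k)).prod) 0 := by
  unfold frobHO
  congr 1
  funext t
  congr 1
  induction d with
  | nil => simp
  | cons a l ih => simp_all [Complex.cpow_natCast]

lemma wave_eq (j : ℕ) (hj : 1 ≤ j) (d : List ℕ) (hd : ∀ x ∈ d, 0 < x)
    (hSne : d.filter (fun x => j ∣ x) ≠ []) (s : ℤ) :
    sylvesterWave j d s =
      (1 / ((((d.filter fun x => j ∣ x).length - 1).factorial : ℂ) *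
          ((d.filter fun x => j ∣ x).prod : ℂ))) *
        ∑ ρ ∈ primitiveRoots j ℂ,
          (ρ ^ (-s) / ((d.filter fun x => ¬ j ∣ x).map fun k => 1 - ρ ^ k).prod) *
            iteratedDeriv ((d.filter fun x => j ∣ x).length - 1)
              (core (d.filter fun x => j ∣ x) (d.filter fun x => ¬ j ∣ x) ρ
                ((s : ℂ) + (((d.filter fun x => j ∣ x).sum : ℕ) : ℂ)
                  + (((d.filter fun x => ¬ j ∣ x).sum : ℕ) : ℂ))) 0 := by
  rw [sylvesterWave]
  set dS := d.filter fun x => j ∣ x with hdS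
  set dN := d.filter fun x => ¬ j ∣ x with hdN
  have hSpos : ∀ k ∈ dS, 0 < k := fun k hk => hd k (List.mem_of_mem_filter hk)
  have hNd : ∀ k ∈ dN, k ∈ d ∧ ¬ j ∣ k := by
    intro k hk
    rw [hdN, List.mem_filter] at hk
    exact ⟨hk.1, by simpa using hk.2⟩
  have homega : dS.length - 1 + 1 = dS.length := by
    have : dS.length ≠ 0 := fun h => hSne (List.length_eq_zero_iff.mp h)
    omega
  congr 1
  apply Finset.sum_congr rfl
  intro ρ hρmem
  have hρ : IsPrimitiveRoot ρ j := (mem_primitiveRoots (by omega)).mp hρmem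
  have hρ1 : ‖ρ‖ = 1 := abs_of_primitive hj hρ
  have hNcond : ∀ k ∈ dN, 0 < k ∧ ρ ^ k ≠ 1 := by
    intro k hk
    refine ⟨hd k (hNd k hk).1, ?_⟩
    exact fun h => (hNd k hk).2 ((hρ.pow_eq_one_iff_dvd k).mp h)
  congr 1
  -- inner sum equals iterated derivative of the product
  set a : ℝ := (s : ℝ) + (dS.sum : ℝ) with ha
  set A : ℂ → ℂ := fun t => Complex.exp ((a : ℂ) * t) * (dS.map fun k => bfC k t).prod with hA
  set B : ℂ → ℂ := fun t => Complex.exp (((dN.sum : ℕ) : ℂ) * t) *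
    (dN.map fun (k : ℕ) => (1 - ρ ^ k) / (Complex.exp ((k : ℂ) * t) - ρ ^ k)).prod with hB
  have hAanal : ∀ x : ℝ, AnalyticAt ℂ A (x : ℂ) := by
    intro x
    exact (analyticAt_cexp.comp (analyticAt_const.mul analyticAt_id)).mul
      (analyticAt_list_prod dS _ fun k hk => analyticAt_bfC (hSpos k hk) x)
  have hAreal : ∀ x : ℝ, A (x : ℂ) =
      ((Real.exp (a * x) * (dS.map fun k => bernFactor k x).prod : ℝ) : ℂ) := by
    intro x
    rw [hA]
    simp only
    rw [Complex.ofReal_mul, ofReal_list_prod, List.map_map]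
    congr 1
    · rw [← Complex.ofReal_mul, Complex.ofReal_exp]
    · congr 1
      apply List.map_congr_left
      intro k _
      exact bfC_ofReal k x
  have hbern : ∀ n : ℕ, ((bernHO dS n a : ℝ) : ℂ) = iteratedDeriv n A 0 := by
    intro n
    have h0 := iteratedDeriv_ofReal n hAanal hAreal (0 : ℝ)
    rw [Complex.ofReal_zero] at h0
    rw [h0]
    rfl
  have hfrob : ∀ m : ℕ, frobHO dN m ρ ((dN.sum : ℕ) : ℂ) = iteratedDeriv m B 0 := by
    intro m
    rw [hB, frobHO_eq]
  have hBanal : AnalyticAt ℂ B 0 := by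
    rw [hB, show (0 : ℂ) = ((0 : ℝ) : ℂ) by norm_num]
    exact (analyticAt_cexp.comp (analyticAt_const.mul analyticAt_id)).mul
      (analyticAt_list_prod dN _ fun k hk =>
        analyticAt_ffC (hNcond k hk).1 hρ1 (hNcond k hk).2 0)
  have hAanal0 : AnalyticAt ℂ A 0 := by
    have := hAanal 0
    simpa using this
  have hAB : (fun t => A t * B t) = core dS dN ρ ((s : ℂ) + ((dS.sum : ℕ) : ℂ)
      + ((dN.sum : ℕ) : ℂ)) := by
    have hcoeff : ((a : ℝ) : ℂ) = (s : ℂ) + ((dS.sum : ℕ) : ℂ) := by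
      rw [ha]; push_cast [ofReal_list_sum, List.map_map]; simp [Function.comp_def]
    funext t
    rw [hA, hB]
    unfold core
    simp only
    rw [show ((s : ℂ) + ((dS.sum : ℕ) : ℂ) + ((dN.sum : ℕ) : ℂ)) * t
        = ((a : ℝ) : ℂ) * t + ((dN.sum : ℕ) : ℂ) * t by rw [hcoeff]; ring,
      Complex.exp_add]
    ring
  rw [← homega]
  calc ∑ n ∈ Finset.range (dS.length - 1 + 1),
        ((dS.length - 1).choose n : ℂ) * ((bernHO dS n a : ℝ) : ℂ)
          * frobHO dN (dS.length - 1 - n) ρ ((dN.sum : ℕ) : ℂ)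
      = ∑ n ∈ Finset.range (dS.length - 1 + 1),
        ((dS.length - 1).choose n : ℂ) *
          (iteratedDeriv n A 0 * iteratedDeriv (dS.length - 1 - n) B 0) := by
        refine Finset.sum_congr rfl fun n _ => ?_
        rw [hbern n, hfrob]
        ring
    _ = iteratedDeriv (dS.length - 1) (fun t => A t * B t) 0 := by
        rw [iteratedDeriv_mul_analytic (dS.length - 1) 0 hAanal0 hBanal]
    _ = iteratedDeriv (dS.length - 1) (core dS dN ρ ((s : ℂ) + ((dS.sum : ℕ) : ℂ)
          + ((dN.sum : ℕ) : ℂ))) 0 := by rw [hAB]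

lemma wave_scalar (ω e' π f X Y : ℂ) (hω : ω ≠ 0) (he : e' ≠ 0) (hπ : π ≠ 0) (hf : f ≠ 0) :
    1 / ((ω * f) * (π * e')) * (X * (e' * ω * Y)) = 1 / (f * π) * (X * Y) := by
  field_simp

lemma cancel_helper (x P u Z : ℂ) (hu : u ≠ 0) (hP : P ≠ 0) :
    x / (P * u) * (u * Z) = x / P * Z := by
  field_simp

lemma bfC_mul {e : ℕ} (he : 0 < e) {t : ℂ} (h : t = 0 ∨ Complex.exp ((e : ℂ) * t) ≠ 1) :
    (Complex.exp ((e : ℂ) * t) - 1) * bfC e t = (e : ℂ) * t := by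
  rcases h with rfl | h
  · simp [bfC]
  · rw [bfC, if_neg (by
      intro ht0
      apply h
      rw [ht0, mul_zero, Complex.exp_zero])]
    rw [mul_comm, div_mul_cancel₀ _ (sub_ne_zero.mpr h)]

lemma analyticAt_core0 {dS dN : List ℕ} {ρ : ℂ} (hρ1 : ‖ρ‖ = 1)
    (hS : ∀ k ∈ dS, 0 < k) (hN : ∀ k ∈ dN, 0 < k ∧ ρ ^ k ≠ 1) (c : ℂ) :
    AnalyticAt ℂ (core dS dN ρ c) 0 := by
  rw [show (0 : ℂ) = ((0 : ℝ) : ℂ) by norm_num]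
  exact analyticAt_core hρ1 hS hN c 0

lemma step_dvd {dS' dN' : List ℕ} {ρ : ℂ} (hρ1 : ‖ρ‖ = 1)
    (hS : ∀ k ∈ dS', 0 < k) (hN : ∀ k ∈ dN', 0 < k ∧ ρ ^ k ≠ 1)
    {e : ℕ} (he : 0 < e) (c : ℂ) (hlen : 1 ≤ dS'.length) :
    iteratedDeriv dS'.length (core (dS' ++ [e]) dN' ρ (c + (e : ℂ))) 0
      - iteratedDeriv dS'.length (core (dS' ++ [e]) dN' ρ c) 0
    = (e : ℂ) * (dS'.length : ℂ) * iteratedDeriv (dS'.length - 1) (core dS' dN' ρ c) 0 := by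
  have hS2 : ∀ k ∈ dS' ++ [e], 0 < k := by
    intro k hk
    rcases List.mem_append.mp hk with h | h
    · exact hS k h
    · rw [List.mem_singleton.mp h]; exact he
  have h1 : AnalyticAt ℂ (core (dS' ++ [e]) dN' ρ (c + (e : ℂ))) 0 :=
    analyticAt_core0 hρ1 hS2 hN _
  have h2 : AnalyticAt ℂ (core (dS' ++ [e]) dN' ρ c) 0 := analyticAt_core0 hρ1 hS2 hN _
  have hcore' : AnalyticAt ℂ (core dS' dN' ρ c) 0 := analyticAt_core0 hρ1 hS hN _
  rw [← iteratedDeriv_sub_analytic dS'.length 0 h1 h2]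
  have hev : (fun t => core (dS' ++ [e]) dN' ρ (c + (e : ℂ)) t - core (dS' ++ [e]) dN' ρ c t)
      =ᶠ[𝓝 (0 : ℂ)] fun t => (e : ℂ) * (t * core dS' dN' ρ c t) := by
    have hball : Metric.ball (0 : ℂ) (2 * Real.pi / e) ∈ 𝓝 (0 : ℂ) :=
      Metric.ball_mem_nhds _ (by positivity)
    filter_upwards [hball] with t ht
    have hbfc : (Complex.exp ((e : ℂ) * t) - 1) * bfC e t = (e : ℂ) * t := by
      apply bfC_mul he
      rcases eq_or_ne t 0 with rfl | ht0
      · exact Or.inl rfl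
      · exact Or.inr (exp_ne_one_of_small he ht0
          (by simpa [Metric.mem_ball, Complex.dist_eq] using ht))
    unfold core
    rw [List.map_append, List.prod_append]
    simp only [List.map_cons, List.map_nil, List.prod_cons, List.prod_nil, mul_one]
    rw [add_mul, Complex.exp_add]
    linear_combination (Complex.exp (c * t) * (dS'.map fun k => bfC k t).prod *
      (dN'.map fun (k : ℕ) => (1 - ρ ^ k) / (Complex.exp ((k : ℂ) * t) - ρ ^ k)).prod) * hbfc
  rw [hev.iteratedDeriv_eq]
  have hmul : AnalyticAt ℂ (fun t => t * core dS' dN' ρ c t) 0 := analyticAt_id.mul hcore'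
  rw [iteratedDeriv_const_mul_analytic (e : ℂ) dS'.length 0 hmul]
  rw [iteratedDeriv_id_mul_analytic hcore' dS'.length hlen]
  ring

lemma step_ndvd {dS' dN' : List ℕ} {ρ : ℂ} (hρ1 : ‖ρ‖ = 1)
    (hS : ∀ k ∈ dS', 0 < k) (hN : ∀ k ∈ dN', 0 < k ∧ ρ ^ k ≠ 1)
    {e : ℕ} (he : 0 < e) (hρe : ρ ^ e ≠ 1) (c : ℂ) (n : ℕ) :
    iteratedDeriv n (core dS' (dN' ++ [e]) ρ (c + (e : ℂ))) 0
      - ρ ^ e * iteratedDeriv n (core dS' (dN' ++ [e]) ρ c) 0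
    = (1 - ρ ^ e) * iteratedDeriv n (core dS' dN' ρ c) 0 := by
  have hN2 : ∀ k ∈ dN' ++ [e], 0 < k ∧ ρ ^ k ≠ 1 := by
    intro k hk
    rcases List.mem_append.mp hk with h | h
    · exact hN k h
    · rw [List.mem_singleton.mp h]; exact ⟨he, hρe⟩
  have h1 : AnalyticAt ℂ (core dS' (dN' ++ [e]) ρ (c + (e : ℂ))) 0 :=
    analyticAt_core0 hρ1 hS hN2 _
  have h2 : AnalyticAt ℂ (core dS' (dN' ++ [e]) ρ c) 0 := analyticAt_core0 hρ1 hS hN2 _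
  have hcore' : AnalyticAt ℂ (core dS' dN' ρ c) 0 := analyticAt_core0 hρ1 hS hN _
  rw [← iteratedDeriv_const_mul_analytic (ρ ^ e) n 0 h2]
  rw [← iteratedDeriv_sub_analytic (g := fun t => ρ ^ e * core dS' (dN' ++ [e]) ρ c t) n 0 h1 (analyticAt_const.mul h2)]
  rw [← iteratedDeriv_const_mul_analytic (1 - ρ ^ e) n 0 hcore']
  apply Filter.EventuallyEq.iteratedDeriv_eq
  have hcont : ContinuousAt (fun t : ℂ => Complex.exp ((e : ℂ) * t) - ρ ^ e) 0 := by fun_prop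
  have hne0 : (fun t : ℂ => Complex.exp ((e : ℂ) * t) - ρ ^ e) 0 ≠ 0 := by
    simp only [mul_zero, Complex.exp_zero]
    rw [sub_ne_zero]
    exact fun h => hρe h.symm
  filter_upwards [hcont.eventually_ne hne0] with t hEt
  unfold core
  rw [List.map_append, List.prod_append]
  simp only [List.map_cons, List.map_nil, List.prod_cons, List.prod_nil, mul_one]
  rw [add_mul, Complex.exp_add]
  field_simp
  exact mul_div_cancel_right₀ _ (by rw [mul_comm t]; exact hEt)

end SylvAux


open SylvAux

theorem sylvesterWave_recursion
    (d : List ℕ) (hd : ∀ x ∈ d, 0 < x) (hne : d ≠ []) (hm : 2 ≤ d.length)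
    (j : ℕ) (hj : 1 ≤ j) (hdiv : ∃ x ∈ d.dropLast, j ∣ x) (s : ℤ) :
    sylvesterWave j d s - sylvesterWave j d (s - (d.getLast hne : ℤ)) =
      sylvesterWave j d.dropLast s := by
  classical
  have happ : d.dropLast ++ [d.getLast hne] = d := List.dropLast_append_getLast hne
  set e := d.getLast hne with he_def
  set d' := d.dropLast with hd'_def
  have hd' : ∀ x ∈ d', 0 < x := fun x hx =>
    hd x (by rw [← happ]; exact List.mem_append_left _ hx)
  have hepos : 0 < e := hd e (by rw [← happ]; exact List.mem_append_right _ (by simp))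
  obtain ⟨x0, hx0d, hx0j⟩ := hdiv
  have hS'ne : d'.filter (fun x => j ∣ x) ≠ [] := by
    intro hnil
    have hx0 : x0 ∈ d'.filter (fun x => j ∣ x) :=
      List.mem_filter.mpr ⟨hx0d, by simpa using hx0j⟩
    rw [hnil] at hx0
    exact List.not_mem_nil hx0
  have hω : 1 ≤ (d'.filter (fun x => j ∣ x)).length :=
    List.length_pos_iff.mpr hS'ne
  have hSdne : d.filter (fun x => j ∣ x) ≠ [] := by
    intro hnil
    have hx0m : x0 ∈ d.filter (fun x => j ∣ x) :=
      List.mem_filter.mpr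
        ⟨by rw [← happ]; exact List.mem_append_left _ hx0d, by simpa using hx0j⟩
    rw [hnil] at hx0m
    exact List.not_mem_nil hx0m
  have hS'pos : ∀ k ∈ d'.filter (fun x => j ∣ x), 0 < k :=
    fun k hk => hd' k (List.mem_of_mem_filter hk)
  have hN'mem : ∀ k ∈ d'.filter (fun x => ¬ j ∣ x), k ∈ d' ∧ ¬ j ∣ k := by
    intro k hk
    rw [List.mem_filter] at hk
    exact ⟨hk.1, by simpa using hk.2⟩
  have hπ' : ((d'.filter (fun x => j ∣ x)).prod : ℂ) ≠ 0 := by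
    rw [Nat.cast_ne_zero]
    exact (List.prod_pos hS'pos).ne'
  rw [wave_eq j hj d hd hSdne s, wave_eq j hj d hd hSdne (s - (e : ℤ)),
    wave_eq j hj d' hd' hS'ne s, ← happ]
  by_cases hc : j ∣ e
  · -- j divides the last part
    have hfS : (d' ++ [e]).filter (fun x => j ∣ x) = d'.filter (fun x => j ∣ x) ++ [e] := by
      rw [List.filter_append]
      congr 1
      simp [hc]
    have hfN : (d' ++ [e]).filter (fun x => ¬ j ∣ x) = d'.filter (fun x => ¬ j ∣ x) := by
      rw [List.filter_append]
      simp [hc]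
    rw [hfS, hfN]
    simp only [List.length_append, List.sum_append, List.prod_append, List.length_cons,
      List.length_nil, List.sum_cons, List.sum_nil, List.prod_cons, List.prod_nil,
      add_zero, mul_one, Nat.add_sub_cancel]
    rw [← mul_sub, ← Finset.sum_sub_distrib, Finset.mul_sum, Finset.mul_sum]
    apply Finset.sum_congr rfl
    intro ρ hρmem
    have hρ : IsPrimitiveRoot ρ j := (mem_primitiveRoots (by omega)).mp hρmem
    have hρ1 : ‖ρ‖ = 1 := abs_of_primitive hj hρ
    have hρ0 : ρ ≠ 0 := by
      intro h
      have := hρ.pow_eq_one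
      rw [h, zero_pow (by omega)] at this
      exact zero_ne_one this
    have hNcond : ∀ k ∈ d'.filter (fun x => ¬ j ∣ x), 0 < k ∧ ρ ^ k ≠ 1 := by
      intro k hk
      exact ⟨hd' k (hN'mem k hk).1,
        fun h => (hN'mem k hk).2 ((hρ.pow_eq_one_iff_dvd k).mp h)⟩
    have hρe1 : ρ ^ e = 1 := (hρ.pow_eq_one_iff_dvd e).mpr hc
    have hzp : ρ ^ (-(s - (e : ℤ))) = ρ ^ (-s) := by
      rw [show -(s - (e : ℤ)) = -s + (e : ℤ) by ring, zpow_add₀ hρ0, zpow_natCast, hρe1,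
        mul_one]
    have hc1 : ((s : ℂ) + (((d'.filter (fun x => j ∣ x)).sum + e : ℕ) : ℂ)
        + (((d'.filter (fun x => ¬ j ∣ x)).sum : ℕ) : ℂ))
        = ((s : ℂ) + (((d'.filter (fun x => j ∣ x)).sum : ℕ) : ℂ)
          + (((d'.filter (fun x => ¬ j ∣ x)).sum : ℕ) : ℂ)) + (e : ℂ) := by
      push_cast
      ring
    have hc2 : (((s - (e : ℤ)) : ℤ) : ℂ) + (((d'.filter (fun x => j ∣ x)).sum + e : ℕ) : ℂ)
        + (((d'.filter (fun x => ¬ j ∣ x)).sum : ℕ) : ℂ)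
        = ((s : ℂ) + (((d'.filter (fun x => j ∣ x)).sum : ℕ) : ℂ)
          + (((d'.filter (fun x => ¬ j ∣ x)).sum : ℕ) : ℂ)) := by
      push_cast
      ring
    rw [hzp, hc1, hc2, Nat.cast_mul]
    set c' := ((s : ℂ) + (((d'.filter (fun x => j ∣ x)).sum : ℕ) : ℂ)
      + (((d'.filter (fun x => ¬ j ∣ x)).sum : ℕ) : ℂ)) with hc'
    have hstep := step_dvd hρ1 hS'pos hNcond hepos c' hω
    set ω := (d'.filter (fun x => j ∣ x)).length with hωdef
    set X := ρ ^ (-s) / ((d'.filter (fun x => ¬ j ∣ x)).map fun k => 1 - ρ ^ k).prod with hX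
    set T1 := iteratedDeriv ω (core ((d'.filter (fun x => j ∣ x)) ++ [e])
      (d'.filter (fun x => ¬ j ∣ x)) ρ (c' + (e : ℂ))) 0 with hT1
    set T2 := iteratedDeriv ω (core ((d'.filter (fun x => j ∣ x)) ++ [e])
      (d'.filter (fun x => ¬ j ∣ x)) ρ c') 0 with hT2
    set Y := iteratedDeriv (ω - 1) (core (d'.filter (fun x => j ∣ x))
      (d'.filter (fun x => ¬ j ∣ x)) ρ c') 0 with hY
    have hfac : (ω.factorial : ℂ) = (ω : ℂ) * ((ω - 1).factorial : ℂ) := by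
      obtain ⟨m, hm'⟩ : ∃ m, ω = m + 1 := ⟨ω - 1, by omega⟩
      rw [hm']
      simp [Nat.factorial_succ]
    have hωC : (ω : ℂ) ≠ 0 := by
      rw [Nat.cast_ne_zero]
      omega
    have heC : ((e : ℕ) : ℂ) ≠ 0 := by
      rw [Nat.cast_ne_zero]
      omega
    have hfacC : ((ω - 1).factorial : ℂ) ≠ 0 := by
      rw [Nat.cast_ne_zero]
      exact (Nat.factorial_pos _).ne'
    calc 1 / ((ω.factorial : ℂ) * (((d'.filter (fun x => j ∣ x)).prod : ℕ) * ((e : ℕ) : ℂ)))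
          * (X * T1 - X * T2)
        = 1 / ((ω.factorial : ℂ) * (((d'.filter (fun x => j ∣ x)).prod : ℕ) * ((e : ℕ) : ℂ)))
          * (X * (T1 - T2)) := by ring
      _ = 1 / ((ω.factorial : ℂ) * (((d'.filter (fun x => j ∣ x)).prod : ℕ) * ((e : ℕ) : ℂ)))
          * (X * (((e : ℕ) : ℂ) * (ω : ℂ) * Y)) := by rw [hstep]
      _ = 1 / (((ω - 1).factorial : ℂ) * ((d'.filter (fun x => j ∣ x)).prod : ℕ))
          * (X * Y) := by
          rw [hfac]
          exact wave_scalar _ _ _ _ X Y hωC heC hπ' hfacC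
  · -- j does not divide the last part
    have hfS : (d' ++ [e]).filter (fun x => j ∣ x) = d'.filter (fun x => j ∣ x) := by
      rw [List.filter_append]
      simp [hc]
    have hfN : (d' ++ [e]).filter (fun x => ¬ j ∣ x) = d'.filter (fun x => ¬ j ∣ x) ++ [e] := by
      rw [List.filter_append]
      congr 1
      simp [hc]
    rw [hfS, hfN]
    simp only [List.sum_append, List.sum_cons, List.sum_nil, add_zero]
    rw [← mul_sub, ← Finset.sum_sub_distrib, Finset.mul_sum, Finset.mul_sum]
    apply Finset.sum_congr rfl
    intro ρ hρmem
    have hρ : IsPrimitiveRoot ρ j := (mem_primitiveRoots (by omega)).mp hρmem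
    have hρ1 : ‖ρ‖ = 1 := abs_of_primitive hj hρ
    have hρ0 : ρ ≠ 0 := by
      intro h
      have := hρ.pow_eq_one
      rw [h, zero_pow (by omega)] at this
      exact zero_ne_one this
    have hNcond : ∀ k ∈ d'.filter (fun x => ¬ j ∣ x), 0 < k ∧ ρ ^ k ≠ 1 := by
      intro k hk
      exact ⟨hd' k (hN'mem k hk).1,
        fun h => (hN'mem k hk).2 ((hρ.pow_eq_one_iff_dvd k).mp h)⟩
    have hρe : ρ ^ e ≠ 1 := fun h => hc ((hρ.pow_eq_one_iff_dvd e).mp h)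
    have h1ρe : (1 : ℂ) - ρ ^ e ≠ 0 := sub_ne_zero.mpr fun h => hρe h.symm
    have hPN : ((d'.filter (fun x => ¬ j ∣ x)).map fun k => 1 - ρ ^ k).prod ≠ 0 := by
      apply List.prod_ne_zero
      intro h0
      obtain ⟨k, hk, hkeq⟩ := List.mem_map.mp h0
      exact (hNcond k hk).2 (by linear_combination -hkeq)
    have hzp : ρ ^ (-(s - (e : ℤ))) = ρ ^ (-s) * ρ ^ e := by
      rw [show -(s - (e : ℤ)) = -s + (e : ℤ) by ring, zpow_add₀ hρ0, zpow_natCast]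
    have hmap : (((d'.filter (fun x => ¬ j ∣ x)) ++ [e]).map fun k => 1 - ρ ^ k).prod
        = ((d'.filter (fun x => ¬ j ∣ x)).map fun k => 1 - ρ ^ k).prod * (1 - ρ ^ e) := by
      rw [List.map_append, List.prod_append]
      simp
    have hc1 : ((s : ℂ) + (((d'.filter (fun x => j ∣ x)).sum : ℕ) : ℂ)
        + (((d'.filter (fun x => ¬ j ∣ x)).sum + e : ℕ) : ℂ))
        = ((s : ℂ) + (((d'.filter (fun x => j ∣ x)).sum : ℕ) : ℂ)
          + (((d'.filter (fun x => ¬ j ∣ x)).sum : ℕ) : ℂ)) + (e : ℂ) := by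
      push_cast
      ring
    have hc2 : (((s - (e : ℤ)) : ℤ) : ℂ) + (((d'.filter (fun x => j ∣ x)).sum : ℕ) : ℂ)
        + (((d'.filter (fun x => ¬ j ∣ x)).sum + e : ℕ) : ℂ)
        = ((s : ℂ) + (((d'.filter (fun x => j ∣ x)).sum : ℕ) : ℂ)
          + (((d'.filter (fun x => ¬ j ∣ x)).sum : ℕ) : ℂ)) := by
      push_cast
      ring
    rw [hzp, hmap, hc1, hc2]
    set c' := ((s : ℂ) + (((d'.filter (fun x => j ∣ x)).sum : ℕ) : ℂ)
      + (((d'.filter (fun x => ¬ j ∣ x)).sum : ℕ) : ℂ)) with hc'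
    set P := ((d'.filter (fun x => ¬ j ∣ x)).map fun k => 1 - ρ ^ k).prod with hP
    set n := (d'.filter (fun x => j ∣ x)).length - 1 with hn
    have hstep := step_ndvd hρ1 hS'pos hNcond hepos hρe c' n
    congr 1
    calc ρ ^ (-s) / (P * (1 - ρ ^ e)) *
          iteratedDeriv n (core (d'.filter (fun x => j ∣ x))
            ((d'.filter (fun x => ¬ j ∣ x)) ++ [e]) ρ (c' + (e : ℂ))) 0
        - ρ ^ (-s) * ρ ^ e / (P * (1 - ρ ^ e)) *
          iteratedDeriv n (core (d'.filter (fun x => j ∣ x))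
            ((d'.filter (fun x => ¬ j ∣ x)) ++ [e]) ρ c') 0
        = ρ ^ (-s) / (P * (1 - ρ ^ e)) *
            (iteratedDeriv n (core (d'.filter (fun x => j ∣ x))
              ((d'.filter (fun x => ¬ j ∣ x)) ++ [e]) ρ (c' + (e : ℂ))) 0
             - ρ ^ e * iteratedDeriv n (core (d'.filter (fun x => j ∣ x))
              ((d'.filter (fun x => ¬ j ∣ x)) ++ [e]) ρ c') 0) := by ring
      _ = ρ ^ (-s) / (P * (1 - ρ ^ e)) *
            ((1 - ρ ^ e) * iteratedDeriv n (core (d'.filter (fun x => j ∣ x))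
              (d'.filter (fun x => ¬ j ∣ x)) ρ c') 0) := by rw [hstep]
      _ = ρ ^ (-s) / P *
            iteratedDeriv n (core (d'.filter (fun x => j ∣ x))
              (d'.filter (fun x => ¬ j ∣ x)) ρ c') 0 := by
          exact cancel_helper _ _ _ _ h1ρe hPN
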